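/- Suppose F = f + Ψ where f : ℝⁿ → ℝ is convex and L-smooth (L > 0) and Ψ : ℝⁿ → ℝ ∪ {+∞} is proper, closed and convex, and suppose F attains its minimum at x*. Let x₀ ∈ ℝⁿ, let M₁ be an affine subspace containing x₀ + span{G_{1/L}(x₀)}, and suppose {M_k}_{k≥1}, {x_k}, {y_k}, {z_k} satisfy the idealized-algorithm conditions: for each k ≥ 1, y_k minimizes ‖y − x*‖ over M_k; x_k minimizes F over M_k; z_k ∈ M_k satisfies ⟨G_{1/L}(z_k), y_k − z_k⟩ ≥ 0 and −⟨G_{1/L}(z_k), x_k − z_k⟩ ≤ 0; and M_{k+1} contains z_k + span{G_{1/L}(z_k)}, y_k + span{G_{1/L}(z_k)}, and x_k + span{G_{1/L}(x_k)}. Then for all k ≥ 1, F(x_k) − F(x*) ≤ 2(L‖x₀ − x*‖² + F(x₀) − F(x*)) / (k(k+1)). -/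

import Mathlib

/-!
Write `T w = w - G(w)/L` for the prox-grad step, so that `T w = prox_{1/L}(w - ∇f(w)/L)`.
Adding the smoothness bound at `w`, the gradient inequality at `w` and the variational
inequality of the prox gives, for every `u`,
`F(T w) ≤ F(u) + ⟪G(w), w - u⟫ - ‖G(w)‖²/(2L)`.
As `T z_k ∈ M_{k+1}`, taking `u = x_k` and `u = x*` and using the two sign conditions on `z_k`
gives, with `δ_k = F(x_k) - F(x*)` and `q_k = ‖G(z_k)‖²/(2L)`,
`δ_{k+1} ≤ δ_k - q_k` and `δ_{k+1} ≤ ⟪G(z_k), y_k - x*⟫ - q_k`.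
As `y_k + span G(z_k) ⊆ M_{k+1}`, the distance `r_k = ‖y_k - x*‖` drops at least as much as
the distance to that line: `‖G(z_k)‖² r_{k+1}² ≤ ‖G(z_k)‖² r_k² - ⟪G(z_k), y_k - x*⟫²`.
These three inequalities make `L r_k² + k(k+1)/2 δ_k` nonincreasing, and the step from `x₀`
bounds its value at `k = 1` by `L ‖x₀ - x*‖² + δ₀`.
-/

open scoped RealInnerProductSpace
open Set Filter Topology

variable {E : Type*} [NormedAddCommGroup E] [InnerProductSpace ℝ E]

theorem ConvexOn.add_inner_le_of_hasGradientAt [CompleteSpace E] {f : E → ℝ} {g x : E}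
    (hf : ConvexOn ℝ univ f) (hg : HasGradientAt f g x) (u : E) :
    f x + ⟪g, u - x⟫ ≤ f u := by
  let ℓ : ℝ →ᵃ[ℝ] E := AffineMap.lineMap x u
  have hℓ : HasDerivAt (f ∘ ℓ) ⟪g, u - x⟫ 0 := by
    have hfx : HasFDerivAt f (InnerProductSpace.toDual ℝ E g) (ℓ 0) := by
      simpa [ℓ] using hasGradientAt_iff_hasFDerivAt.mp hg
    simpa using hfx.comp_hasDerivAt (0 : ℝ) AffineMap.hasDerivAt_lineMap
  have := (hf.comp_affineMap ℓ).le_slope_of_hasDerivAt (mem_univ 0) (mem_univ 1) one_pos hℓ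
  simp only [ℓ, Function.comp_apply, AffineMap.lineMap_apply_zero, AffineMap.lineMap_apply_one,
    slope_def_field, sub_zero, div_one] at this
  linarith

def IsProxPoint (Ψ : E → EReal) (t : ℝ) (v p : E) : Prop :=
  ∀ z, Ψ p + ((‖v - p‖ ^ 2 / (2 * t) : ℝ) : EReal) ≤ Ψ z + ((‖v - z‖ ^ 2 / (2 * t) : ℝ) : EReal)

theorem IsProxPoint.add_inner_div_le {Ψ : E → EReal}
    (hconvex : ∀ x y : E, ∀ a b : ℝ, 0 ≤ a → 0 ≤ b → a + b = 1 →
      Ψ (a • x + b • y) ≤ (a : EReal) * Ψ x + (b : EReal) * Ψ y)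
    {t : ℝ} (ht : 0 < t) {v p u : E} (hp : IsProxPoint Ψ t v p) {ψp ψu : ℝ}
    (hΨp : Ψ p = ψp) (hΨu : Ψ u = ψu) :
    ψp + ⟪v - p, u - p⟫ / t ≤ ψu := by
  have hsmall : ∀ l ∈ Ioc (0 : ℝ) 1,
      ψp + ⟪v - p, u - p⟫ / t ≤ ψu + l * (‖u - p‖ ^ 2 / (2 * t)) := by
    rintro l ⟨hl0, hl1⟩
    have hcomb : (1 - l) • p + l • u = p + l • (u - p) := by module
    have hΨcomb : Ψ (p + l • (u - p)) ≤ (((1 - l) * ψp + l * ψu : ℝ) : EReal) := by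
      have := hconvex p u (1 - l) l (by linarith) hl0.le (by ring)
      rwa [hcomb, hΨp, hΨu] at this
    have hmin := (hp _).trans (add_le_add_left hΨcomb _)
    rw [hΨp] at hmin
    have hmin' : ψp + ‖v - p‖ ^ 2 / (2 * t)
        ≤ (1 - l) * ψp + l * ψu + ‖v - (p + l • (u - p))‖ ^ 2 / (2 * t) := by
      exact_mod_cast hmin
    have hexpand : ‖v - (p + l • (u - p))‖ ^ 2
        = ‖v - p‖ ^ 2 - 2 * l * ⟪v - p, u - p⟫ + l ^ 2 * ‖u - p‖ ^ 2 := by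
      rw [sub_add_eq_sub_sub, norm_sub_sq_real, real_inner_smul_right, norm_smul,
        Real.norm_eq_abs, mul_pow, sq_abs]
      ring
    rw [hexpand] at hmin'
    have : l * (ψp + ⟪v - p, u - p⟫ / t) ≤ l * (ψu + l * (‖u - p‖ ^ 2 / (2 * t))) := by
      field_simp at hmin' ⊢
      nlinarith
    exact le_of_mul_le_mul_left this hl0
  have hlim : Tendsto (fun l : ℝ => ψu + l * (‖u - p‖ ^ 2 / (2 * t))) (𝓝[>] 0) (𝓝 ψu) :=
    tendsto_nhdsWithin_of_tendsto_nhds ((by fun_prop : Continuous fun l : ℝ =>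
      ψu + l * (‖u - p‖ ^ 2 / (2 * t))).tendsto' 0 ψu (by simp))
  exact ge_of_tendsto hlim (mem_of_superset (Ioc_mem_nhdsGT one_pos) hsmall)

theorem IsProxPoint.prox_grad_inequality [CompleteSpace E] {f : E → ℝ} {f' : E → E}
    {Ψ : E → EReal} {L : ℝ} (hL : 0 < L) (hdiff : ∀ x, HasGradientAt f (f' x) x)
    (hfconvex : ConvexOn ℝ univ f)
    (hsmooth : ∀ x y : E, |f x - f y - ⟪f' y, x - y⟫| ≤ L / 2 * ‖x - y‖ ^ 2)
    (hbot : ∀ x, Ψ x ≠ ⊥)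
    (hconvex : ∀ x y : E, ∀ a b : ℝ, 0 ≤ a → 0 ≤ b → a + b = 1 →
      Ψ (a • x + b • y) ≤ (a : EReal) * Ψ x + (b : EReal) * Ψ y)
    {w G : E} (hG : IsProxPoint Ψ (1 / L) (w - (1 / L) • f' w) (w - (1 / L) • G)) (u : E) :
    (f (w - (1 / L) • G) : EReal) + Ψ (w - (1 / L) • G)
      ≤ (f u : EReal) + Ψ u + ((⟪G, w - u⟫ - ‖G‖ ^ 2 / (2 * L) : ℝ) : EReal) := by
  set p := w - (1 / L) • G with hp
  obtain hΨu | hΨu := eq_or_ne (Ψ u) ⊤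
  · rw [hΨu, EReal.coe_add_top, EReal.top_add_coe]
    exact le_top
  obtain ⟨ψu, hψu⟩ : ∃ ψu : ℝ, Ψ u = ψu := ⟨_, (EReal.coe_toReal hΨu (hbot u)).symm⟩
  have hΨp : Ψ p ≠ ⊤ := fun htop => by simpa [htop, hψu, ← EReal.coe_add] using hG u
  obtain ⟨ψp, hψp⟩ : ∃ ψp : ℝ, Ψ p = ψp := ⟨_, (EReal.coe_toReal hΨp (hbot p)).symm⟩
  have hprox := hG.add_inner_div_le hconvex (by positivity) hψp hψu
  have hupper := (abs_le.mp (hsmooth p w)).2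
  have hlower := hfconvex.add_inner_le_of_hasGradientAt (hdiff w) u
  have h1 : w - (1 / L) • f' w - p = (1 / L) • (G - f' w) := by rw [hp]; module
  have h2 : u - p = (u - w) + (1 / L) • G := by rw [hp]; module
  have h3 : p - w = -((1 / L) • G) := by rw [hp]; module
  rw [h1, h2, inner_add_right, real_inner_smul_left, real_inner_smul_left, real_inner_smul_right,
    inner_sub_left, inner_sub_left, real_inner_self_eq_norm_sq] at hprox
  rw [h3, inner_neg_right, real_inner_smul_right, norm_neg, norm_smul, Real.norm_eq_abs, mul_pow,
    sq_abs] at hupper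
  rw [hψu, hψp, ← neg_sub u w, inner_neg_right]
  have : f p + ψp ≤ f u + ψu + (-⟪G, u - w⟫ - ‖G‖ ^ 2 / (2 * L)) := by
    field_simp at hprox hupper ⊢
    nlinarith
  exact_mod_cast this

theorem sq_inner_le_of_forall_le_norm_add_smul {v g : E} {r : ℝ} (hr : 0 ≤ r)
    (h : ∀ c : ℝ, r ≤ ‖v + c • g‖) : ⟪g, v⟫ ^ 2 ≤ ‖g‖ ^ 2 * (‖v‖ ^ 2 - r ^ 2) := by
  obtain rfl | hg := eq_or_ne g 0
  · simp
  have hg2 : 0 < ‖g‖ ^ 2 := by positivity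
  have hmin := pow_le_pow_left₀ hr (h (-(⟪g, v⟫ / ‖g‖ ^ 2))) 2
  rw [norm_add_sq_real, real_inner_smul_right, norm_smul, Real.norm_eq_abs, mul_pow, sq_abs,
    real_inner_comm g v] at hmin
  field_simp at hmin
  nlinarith

/-- One step of the Lyapunov function `L r² + K(K+1)/2 δ`: here `δ, δ'` are consecutive optimality
gaps, `r, r'` consecutive distances `‖y - x*‖`, `s = ‖G(z)‖²` and `a = ⟪G(z), y - x*⟫`. -/
theorem lyapunov_step {L K δ δ' s a r r' : ℝ} (hL : 0 < L) (hK : 0 ≤ K) (hδ' : 0 ≤ δ')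
    (hs : 0 ≤ s) (hdec : δ' ≤ δ - s / (2 * L)) (hopt : δ' ≤ a - s / (2 * L))
    (hproj : a ^ 2 ≤ s * (r ^ 2 - r' ^ 2)) (hr' : 0 ≤ r') (hmono : r' ≤ r) :
    L * r' ^ 2 + (K + 1) * (K + 2) / 2 * δ' ≤ L * r ^ 2 + K * (K + 1) / 2 * δ := by
  generalize hq : s / (2 * L) = q at hdec hopt
  have hsq : s = 2 * L * q := by rw [← hq]; field_simp
  rw [hsq] at hproj
  have hq0 : 0 ≤ q := by rw [← hq]; positivity
  have hδ : 0 ≤ δ := by linarith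
  obtain hq | hq := hq0.eq_or_lt
  · subst hq
    have : δ' = 0 := by nlinarith
    subst this
    nlinarith [mul_le_mul_of_nonneg_left (pow_le_pow_left₀ hr' hmono 2) hL.le,
      mul_nonneg (mul_nonneg hK (by linarith : 0 ≤ K + 1)) hδ]
  have hsq : (δ' + q) ^ 2 ≤ 2 * L * q * (r ^ 2 - r' ^ 2) :=
    (pow_le_pow_left₀ (by positivity) (le_sub_iff_add_le.mp hopt) 2).trans hproj
  have hkey : 2 * q * ((K + 1) * (K + 2) / 2 * δ' - K * (K + 1) / 2 * δ) ≤ (δ' + q) ^ 2 := by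
    nlinarith [sq_nonneg (δ' - K * q), mul_nonneg (by linarith : 0 ≤ K + 1) (sq_nonneg q),
      mul_le_mul_of_nonneg_left hdec (by positivity : 0 ≤ K * (K + 1) * q)]
  nlinarith

theorem idealized_rate_of_real_bounds {L : ℝ} (hL : 0 < L) {φ : ℕ → ℝ} {φstar : ℝ} {g y : ℕ → E}
    {x₀ xstar : E} (hmin : ∀ k, φstar ≤ φ k)
    (hdec : ∀ k, 1 ≤ k → φ (k + 1) ≤ φ k - ‖g k‖ ^ 2 / (2 * L))
    (hopt : ∀ k, 1 ≤ k → φ (k + 1) ≤ φstar + ⟪g k, y k - xstar⟫ - ‖g k‖ ^ 2 / (2 * L))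
    (hproj : ∀ k, 1 ≤ k → ∀ c : ℝ, ‖y (k + 1) - xstar‖ ≤ ‖y k + c • g k - xstar‖)
    (hφ₁ : φ 1 ≤ φ 0) (hy₁ : ‖y 1 - xstar‖ ≤ ‖x₀ - xstar‖) {k : ℕ} (hk : 1 ≤ k) :
    φ k - φstar ≤ 2 / (k * (k + 1)) * (L * ‖x₀ - xstar‖ ^ 2 + (φ 0 - φstar)) := by
  have hlyap : ∀ k, 1 ≤ k → L * ‖y k - xstar‖ ^ 2 + k * (k + 1) / 2 * (φ k - φstar)
      ≤ L * ‖y 1 - xstar‖ ^ 2 + (φ 1 - φstar) := by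
    intro k hk
    induction k, hk using Nat.le_induction with
    | base => norm_num
    | succ k hk ih =>
      have hv : ∀ c : ℝ, ‖y (k + 1) - xstar‖ ≤ ‖(y k - xstar) + c • g k‖ := fun c => by
        simpa only [sub_add_eq_add_sub] using hproj k hk c
      have := lyapunov_step (δ := φ k - φstar) hL k.cast_nonneg (sub_nonneg.2 (hmin (k + 1)))
        (sq_nonneg ‖g k‖) (by linarith [hdec k hk]) (by linarith [hopt k hk])
        (sq_inner_le_of_forall_le_norm_add_smul (norm_nonneg _) hv) (norm_nonneg _)
        (by simpa using hv 0)
      push_cast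
      linarith
  have hK : (0 : ℝ) < k * (k + 1) := by positivity
  have hbound : k * (k + 1) / 2 * (φ k - φstar) ≤ L * ‖x₀ - xstar‖ ^ 2 + (φ 0 - φstar) := by
    nlinarith [hlyap k hk, pow_le_pow_left₀ (norm_nonneg _) hy₁ 2]
  rw [div_mul_eq_mul_div, le_div_iff₀ hK]
  linarith

theorem EReal.toReal_le_toReal_add_of_le {a b : EReal} {c : ℝ} (h : a ≤ b + c) (ha : a ≠ ⊥)
    (hb : b ≠ ⊤) : a.toReal ≤ b.toReal + c := by
  have hb' : b ≠ ⊥ := by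
    rintro rfl
    exact ha (le_bot_iff.mp (by simpa using h))
  lift b to ℝ using ⟨hb, hb'⟩
  have ha' : a ≠ ⊤ := ne_top_of_le_ne_top (by simp [← EReal.coe_add]) h
  lift a to ℝ using ⟨ha', ha⟩
  simpa using (by exact_mod_cast h : a ≤ b + c)

theorem idealized_rate_of_descent {L : ℝ} (hL : 0 < L) {F : E → EReal} {g : E → E} {xstar : E}
    (hFbot : ∀ w, F w ≠ ⊥) (hFstar : F xstar ≠ ⊤) (hxstar : ∀ w, F xstar ≤ F w)
    (hdesc : ∀ w u, F (w - (1 / L) • g w)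
      ≤ F u + ((⟪g w, w - u⟫ - ‖g w‖ ^ 2 / (2 * L) : ℝ) : EReal))
    {M : ℕ → AffineSubspace ℝ E} {x y z : ℕ → E}
    (hy : ∀ k, 1 ≤ k → ∀ w ∈ M k, ‖y k - xstar‖ ≤ ‖w - xstar‖)
    (hx : ∀ k, 1 ≤ k → ∀ w ∈ M k, F (x k) ≤ F w)
    (hzy : ∀ k, 1 ≤ k → 0 ≤ ⟪g (z k), y k - z k⟫)
    (hzx : ∀ k, 1 ≤ k → 0 ≤ ⟪g (z k), x k - z k⟫)
    (hMx : ∀ k (c : ℝ), x k + c • g (x k) ∈ M (k + 1))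
    (hMy : ∀ k, 1 ≤ k → ∀ c : ℝ, y k + c • g (z k) ∈ M (k + 1))
    (hMz : ∀ k, 1 ≤ k → ∀ c : ℝ, z k + c • g (z k) ∈ M (k + 1)) {k : ℕ} (hk : 1 ≤ k) :
    F (x k) - F xstar
      ≤ ((2 / ((k : ℝ) * ((k : ℝ) + 1)) : ℝ) : EReal)
        * (((L * ‖x 0 - xstar‖ ^ 2 : ℝ) : EReal) + (F (x 0) - F xstar)) := by
  have hnext : ∀ k w, (∀ c : ℝ, w + c • g w ∈ M (k + 1)) → ∀ u, F (x (k + 1))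
      ≤ F u + ((⟪g w, w - u⟫ - ‖g w‖ ^ 2 / (2 * L) : ℝ) : EReal) := by
    intro k w hw u
    refine (hx (k + 1) (by omega) _ ?_).trans (hdesc w u)
    simpa only [neg_smul, ← sub_eq_add_neg] using hw (-(1 / L))
  obtain hx0 | hx0 := eq_or_ne (F (x 0)) ⊤
  · rw [hx0, EReal.top_sub hFstar, EReal.coe_add_top, EReal.coe_mul_top_of_pos (by positivity)]
    exact le_top
  have hfin : ∀ j, F (x j) ≠ ⊤ := by
    rintro (_ | j)
    exacts [hx0, ne_top_of_le_ne_top (EReal.add_ne_top hFstar (EReal.coe_ne_top _))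
      (hnext j _ (hMx j) xstar)]
  have hreal : ∀ j, 1 ≤ j → ∀ u, F u ≠ ⊤ → (F (x (j + 1))).toReal
      ≤ (F u).toReal + (⟪g (z j), z j - u⟫ - ‖g (z j)‖ ^ 2 / (2 * L)) :=
    fun j hj u hu => EReal.toReal_le_toReal_add_of_le (hnext j _ (hMz j hj) u) (hFbot _) hu
  have hrate := idealized_rate_of_real_bounds hL (φ := fun j => (F (x j)).toReal)
    (φstar := (F xstar).toReal) (g := fun j => g (z j)) (x₀ := x 0)
    (fun j => EReal.toReal_le_toReal (hxstar _) (hFbot _) (hfin j))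
    (fun j hj => by
      linarith [hreal j hj (x j) (hfin j), hzx j hj,
        inner_sub_right (𝕜 := ℝ) (g (z j)) (z j) (x j),
        inner_sub_right (𝕜 := ℝ) (g (z j)) (x j) (z j)])
    (fun j hj => by
      linarith [hreal j hj xstar hFstar, hzy j hj,
        inner_sub_right (𝕜 := ℝ) (g (z j)) (z j) xstar,
        inner_sub_right (𝕜 := ℝ) (g (z j)) (y j) (z j),
        inner_sub_right (𝕜 := ℝ) (g (z j)) (y j) xstar])
    (fun j hj c => hy (j + 1) (by omega) _ (hMy j hj c))
    (by
      have := EReal.toReal_le_toReal_add_of_le (hnext 0 _ (hMx 0) (x 0)) (hFbot _) hx0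
      rw [sub_self, inner_zero_right] at this
      linarith [div_nonneg (sq_nonneg ‖g (x 0)‖) (by positivity : (0 : ℝ) ≤ 2 * L)])
    (hy 1 le_rfl _ (by simpa using hMx 0 0)) hk
  rw [← EReal.coe_toReal (hfin k) (hFbot _), ← EReal.coe_toReal hx0 (hFbot _),
    ← EReal.coe_toReal hFstar (hFbot _)]
  exact_mod_cast hrate

theorem idealized_algorithm_convex_rate_general {n : ℕ} (L : ℝ) (hL : 0 < L)
    (f : EuclideanSpace ℝ (Fin n) → ℝ)
    (f' : EuclideanSpace ℝ (Fin n) → EuclideanSpace ℝ (Fin n))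
    (hdiff : ∀ x, HasGradientAt f (f' x) x)
    (hfconvex : ConvexOn ℝ Set.univ f)
    (hsmooth : ∀ x y : EuclideanSpace ℝ (Fin n),
      |f x - f y - ⟪f' y, x - y⟫| ≤ L / 2 * ‖x - y‖ ^ 2)
    (Ψ : EuclideanSpace ℝ (Fin n) → EReal)
    (hproper : (∀ x, Ψ x ≠ ⊥) ∧ (∃ x, Ψ x ≠ ⊤))
    (hconvex : ∀ x y : EuclideanSpace ℝ (Fin n), ∀ a b : ℝ, 0 ≤ a → 0 ≤ b → a + b = 1 →
      Ψ (a • x + b • y) ≤ (a : EReal) * Ψ x + (b : EReal) * Ψ y)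
    (prox : ℝ → EuclideanSpace ℝ (Fin n) → EuclideanSpace ℝ (Fin n))
    (hprox : ∀ t : ℝ, 0 < t → ∀ x z : EuclideanSpace ℝ (Fin n),
      Ψ (prox t x) + ((‖x - prox t x‖ ^ 2 / (2 * t) : ℝ) : EReal)
        ≤ Ψ z + ((‖x - z‖ ^ 2 / (2 * t) : ℝ) : EReal))
    (F : EuclideanSpace ℝ (Fin n) → EReal)
    (hF : ∀ x, F x = (f x : EReal) + Ψ x)
    (G : ℝ → EuclideanSpace ℝ (Fin n) → EuclideanSpace ℝ (Fin n))
    (hG : ∀ t x, G t x = t⁻¹ • (x - prox t (x - t • f' x)))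
    (xstar : EuclideanSpace ℝ (Fin n)) (hxstar : ∀ w, F xstar ≤ F w)
    (M : ℕ → AffineSubspace ℝ (EuclideanSpace ℝ (Fin n)))
    (x y z : ℕ → EuclideanSpace ℝ (Fin n))
    (hM1 : ∀ c : ℝ, x 0 + c • G (1 / L) (x 0) ∈ M 1)
    (hy : ∀ k, 1 ≤ k → y k ∈ M k ∧ ∀ w ∈ M k, ‖y k - xstar‖ ≤ ‖w - xstar‖)
    (hx : ∀ k, 1 ≤ k → x k ∈ M k ∧ ∀ w ∈ M k, F (x k) ≤ F w)
    (hz : ∀ k, 1 ≤ k → z k ∈ M k ∧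
      0 ≤ ⟪G (1 / L) (z k), y k - z k⟫ ∧
      -⟪G (1 / L) (z k), x k - z k⟫ ≤ 0)
    (hM : ∀ k, 1 ≤ k → ∀ c : ℝ,
      z k + c • G (1 / L) (z k) ∈ M (k + 1) ∧
      y k + c • G (1 / L) (z k) ∈ M (k + 1) ∧
      x k + c • G (1 / L) (x k) ∈ M (k + 1)) :
    ∀ k : ℕ, 1 ≤ k →
      F (x k) - F xstar
        ≤ ((2 / ((k : ℝ) * ((k : ℝ) + 1)) : ℝ) : EReal)
          * (((L * ‖x 0 - xstar‖ ^ 2 : ℝ) : EReal) + (F (x 0) - F xstar)) := by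
  obtain ⟨hbot, x₁, hx₁⟩ := hproper
  have hdesc : ∀ w u, F (w - (1 / L) • G (1 / L) w)
      ≤ F u + ((⟪G (1 / L) w, w - u⟫ - ‖G (1 / L) w‖ ^ 2 / (2 * L) : ℝ) : EReal) := by
    intro w u
    have hstep : w - (1 / L) • G (1 / L) w = prox (1 / L) (w - (1 / L) • f' w) := by
      rw [hG, smul_inv_smul₀ (by positivity), sub_sub_cancel]
    rw [hF, hF]
    exact IsProxPoint.prox_grad_inequality hL hdiff hfconvex hsmooth hbot hconvex
      (hstep ▸ hprox _ (by positivity) _) u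
  intro k hk
  refine idealized_rate_of_descent hL (fun w => ?_) ?_ hxstar hdesc (fun k hk => (hy k hk).2)
    (fun k hk => (hx k hk).2) (fun k hk => (hz k hk).2.1) (fun k hk => neg_nonpos.mp (hz k hk).2.2)
    ?_ (fun k hk c => (hM k hk c).2.1) (fun k hk c => (hM k hk c).1) hk
  · rw [hF]
    exact EReal.add_ne_bot_iff.2 ⟨EReal.coe_ne_bot _, hbot w⟩
  · refine ne_top_of_le_ne_top ?_ (hxstar x₁)
    rw [hF]
    exact EReal.add_ne_top (EReal.coe_ne_top _) hx₁
  · rintro (_ | k) c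
    exacts [hM1 c, (hM (k + 1) (by omega) c).2.2]

/-- `O(1/k²)` convergence rate of the idealized algorithmic
framework for convex composite minimization. -/
theorem idealized_algorithm_convex_rate {n : ℕ} (L : ℝ) (hL : 0 < L)
    (f : EuclideanSpace ℝ (Fin n) → ℝ)
    (f' : EuclideanSpace ℝ (Fin n) → EuclideanSpace ℝ (Fin n))
    (hdiff : ∀ x, HasGradientAt f (f' x) x)
    (hfconvex : ConvexOn ℝ Set.univ f)
    (hsmooth : ∀ x y : EuclideanSpace ℝ (Fin n),
      |f x - f y - ⟪f' y, x - y⟫| ≤ L / 2 * ‖x - y‖ ^ 2)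
    (Ψ : EuclideanSpace ℝ (Fin n) → EReal)
    (hproper : (∀ x, Ψ x ≠ ⊥) ∧ (∃ x, Ψ x ≠ ⊤))
    (hclosed : LowerSemicontinuous Ψ)
    (hconvex : ∀ x y : EuclideanSpace ℝ (Fin n), ∀ a b : ℝ, 0 ≤ a → 0 ≤ b → a + b = 1 →
      Ψ (a • x + b • y) ≤ (a : EReal) * Ψ x + (b : EReal) * Ψ y)
    (prox : ℝ → EuclideanSpace ℝ (Fin n) → EuclideanSpace ℝ (Fin n))
    (hprox : ∀ t : ℝ, 0 < t → ∀ x z : EuclideanSpace ℝ (Fin n),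
      Ψ (prox t x) + ((‖x - prox t x‖ ^ 2 / (2 * t) : ℝ) : EReal)
        ≤ Ψ z + ((‖x - z‖ ^ 2 / (2 * t) : ℝ) : EReal))
    (F : EuclideanSpace ℝ (Fin n) → EReal)
    (hF : ∀ x, F x = (f x : EReal) + Ψ x)
    (G : ℝ → EuclideanSpace ℝ (Fin n) → EuclideanSpace ℝ (Fin n))
    (hG : ∀ t x, G t x = t⁻¹ • (x - prox t (x - t • f' x)))
    (xstar : EuclideanSpace ℝ (Fin n)) (hxstar : ∀ w, F xstar ≤ F w)
    (M : ℕ → AffineSubspace ℝ (EuclideanSpace ℝ (Fin n)))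
    (x y z : ℕ → EuclideanSpace ℝ (Fin n))
    (hM1 : ∀ c : ℝ, x 0 + c • G (1 / L) (x 0) ∈ M 1)
    (hy : ∀ k, 1 ≤ k → y k ∈ M k ∧ ∀ w ∈ M k, ‖y k - xstar‖ ≤ ‖w - xstar‖)
    (hx : ∀ k, 1 ≤ k → x k ∈ M k ∧ ∀ w ∈ M k, F (x k) ≤ F w)
    (hz : ∀ k, 1 ≤ k → z k ∈ M k ∧
      0 ≤ ⟪G (1 / L) (z k), y k - z k⟫ ∧
      -⟪G (1 / L) (z k), x k - z k⟫ ≤ 0)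
    (hM : ∀ k, 1 ≤ k → ∀ c : ℝ,
      z k + c • G (1 / L) (z k) ∈ M (k + 1) ∧
      y k + c • G (1 / L) (z k) ∈ M (k + 1) ∧
      x k + c • G (1 / L) (x k) ∈ M (k + 1)) :
    ∀ k : ℕ, 1 ≤ k →
      F (x k) - F xstar
        ≤ ((2 / ((k : ℝ) * ((k : ℝ) + 1)) : ℝ) : EReal)
          * (((L * ‖x 0 - xstar‖ ^ 2 : ℝ) : EReal) + (F (x 0) - F xstar)) :=
  idealized_algorithm_convex_rate_general L hL f f' hdiff hfconvex hsmooth Ψ hproper hconvex prox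
    hprox F hF G hG xstar hxstar M x y z hM1 hy hx hz hM
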